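/- arXiv:2002.08949 — 4 statements merged into one kernel-verified Lean document; each statement's English description precedes it below -/
import Mathlib

section
/- Let d, n be natural numbers with n > d ≥ 1, and let b₁, …, bₙ be i.i.d. random vectors in ℝᵈ whose common law is absolutely continuous with respect to d-dimensional Lebesgue measure. Then with probability 1 the following holds: every probability vector p ∈ ℝⁿ (i.e. pᵢ ≥ 0 for all i and Σᵢ pᵢ = 1) that satisfies the constraint Σᵢ pᵢ bᵢ = 0 and minimizes the objective Σᵢ pᵢ ‖bᵢ‖² over all probability vectors satisfying this constraint, has at most d + 1 nonzero entries. -/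
open MeasureTheory Finset Module Filter Topology RealInnerProductSpace

/-!
A minimizer `p` of a linear cost `∑ pᵢ cᵢ` over the unbiased weights is a critical point along
every direction `u` supported on `supp p` with `∑ uᵢ = 0` and `∑ uᵢ xᵢ = 0`, so `∑ uᵢ cᵢ = 0`
for all such `u`. Hence if the lifted points `(xᵢ, cᵢ, 1)` are linearly independent on some
`T ⊆ supp p`, so are the points `(xᵢ, 1)` of `ℝᵈ × ℝ`, and `#T ≤ d + 1`: the support of `p` is
small as soon as any `d + 2` lifted points are linearly independent.

For `cᵢ = ‖bᵢ‖²` the lifts lie on a paraboloid, which a hyperplane of `ℝᵈ × ℝ × ℝ` meets above a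
sphere, an affine hyperplane or nothing, all Lebesgue-null. Adding independent points one at a
time, Fubini then shows that any `d + 2` lifted `bᵢ` are almost surely linearly independent.
-/

section Deterministic

variable {ι E : Type*} [Fintype ι] [AddCommGroup E] [Module ℝ E]

def unbiasedWeights (x : ι → E) : Set (ι → ℝ) :=
  stdSimplex ℝ ι ∩ {p | ∑ i, p i • x i = 0}

variable {x : ι → E} {c p : ι → ℝ}

theorem sum_mul_eq_zero_of_isMinOn_unbiasedWeights (hp : p ∈ unbiasedWeights x)
    (hmin : IsMinOn (fun q => ∑ i, q i * c i) (unbiasedWeights x) p) {u : ι → ℝ}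
    (hu : ∀ i, p i = 0 → u i = 0) (hu_sum : ∑ i, u i = 0) (hux : ∑ i, u i • x i = 0) :
    ∑ i, u i * c i = 0 := by
  obtain ⟨⟨hp_nonneg, hp_sum⟩, hpx : ∑ i, p i • x i = 0⟩ := hp
  have hfeas : ∀ᶠ t in 𝓝 (0 : ℝ), p + t • u ∈ unbiasedWeights x := by
    have hnonneg (i : ι) : ∀ᶠ t in 𝓝 (0 : ℝ), 0 ≤ p i + t * u i := by
      rcases (hp_nonneg i).eq_or_lt with hpi | hpi
      · simp [hu i hpi.symm, ← hpi]
      · have hcont : Continuous fun t : ℝ => p i + t * u i := by fun_prop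
        exact (hcont.tendsto' 0 (p i) (by simp)).eventually (eventually_ge_nhds hpi)
    filter_upwards [eventually_all.2 hnonneg] with t ht
    refine ⟨⟨ht, ?_⟩, ?_⟩
    · simp [sum_add_distrib, ← mul_sum, hp_sum, hu_sum]
    · simp [add_smul, sum_add_distrib, mul_smul, ← smul_sum, hpx, hux]
  have hloc : IsLocalMin (fun t : ℝ => ∑ i, (p + t • u) i * c i) 0 :=
    hfeas.mono fun t ht => by simpa using hmin ht
  have hderiv : HasDerivAt (fun t : ℝ => ∑ i, (p + t • u) i * c i) (∑ i, u i * c i) 0 := by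
    have hlin : (fun t : ℝ => ∑ i, (p + t • u) i * c i)
        = fun t => ∑ i, p i * c i + t * ∑ i, u i * c i := by
      ext t
      simp [add_mul, sum_add_distrib, mul_sum, mul_assoc]
    rw [hlin]
    simpa using ((hasDerivAt_id (0 : ℝ)).mul_const (∑ i, u i * c i)).const_add (∑ i, p i * c i)
  exact hloc.hasDerivAt_eq_zero hderiv

theorem linearIndepOn_of_isMinOn_unbiasedWeights (hp : p ∈ unbiasedWeights x)
    (hmin : IsMinOn (fun q => ∑ i, q i * c i) (unbiasedWeights x) p) {T : Finset ι}
    (hT : ∀ i ∈ T, p i ≠ 0) (hli : LinearIndepOn ℝ (fun i => (x i, c i, (1 : ℝ))) T) :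
    LinearIndepOn ℝ (fun i => (x i, (1 : ℝ))) T := by
  classical
  rw [linearIndepOn_finset_iff] at hli ⊢
  intro w hw
  simp only [Prod.ext_iff, Prod.fst_sum, Prod.snd_sum, Prod.smul_mk, smul_eq_mul, mul_one,
    Prod.fst_zero, Prod.snd_zero] at hw
  have hc : ∑ i ∈ T, w i * c i = 0 := by
    have := sum_mul_eq_zero_of_isMinOn_unbiasedWeights hp hmin
      (u := fun i => if i ∈ T then w i else 0) (fun i hi => if_neg fun hiT => hT i hiT hi)
      (by simpa [Fintype.sum_extend_by_zero] using hw.2)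
      (by simpa [ite_smul, Fintype.sum_extend_by_zero] using hw.1)
    simpa [ite_mul, Fintype.sum_extend_by_zero] using this
  refine hli w ?_
  simp [Prod.ext_iff, Prod.fst_sum, Prod.snd_sum, hw.1, hw.2, hc]

theorem card_support_le_of_isMinOn_unbiasedWeights [FiniteDimensional ℝ E]
    (hgen : ∀ T : Finset ι, #T ≤ finrank ℝ E + 2 →
      LinearIndepOn ℝ (fun i => (x i, c i, (1 : ℝ))) T)
    (hp : p ∈ unbiasedWeights x)
    (hmin : IsMinOn (fun q => ∑ i, q i * c i) (unbiasedWeights x) p) :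
    #{i | p i ≠ 0} ≤ finrank ℝ E + 1 := by
  by_contra! hcard
  obtain ⟨T, hT_supp, hT_card⟩ := exists_subset_card_eq (Nat.succ_le_of_lt hcard)
  have hli := linearIndepOn_of_isMinOn_unbiasedWeights hp hmin
    (fun i hi => (mem_filter.1 (hT_supp hi)).2) (hgen T hT_card.le)
  have := hli.fintype_card_le_finrank
  simp only [SetLike.coe_sort_coe, Fintype.card_coe, finrank_prod, finrank_self] at this
  omega

end Deterministic

theorem addHaar_setOf_linear_eq {E : Type*} [NormedAddCommGroup E] [NormedSpace ℝ E]
    [FiniteDimensional ℝ E] [MeasurableSpace E] [BorelSpace E] (μ : Measure E)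
    [μ.IsAddHaarMeasure] {a : E →ₗ[ℝ] ℝ} (ha : a ≠ 0) (t : ℝ) : μ {x | a x = t} = 0 := by
  obtain ⟨x₀, rfl⟩ := LinearMap.surjective_of_ne_zero ha t
  have hker : {x | a x = a x₀} = (· + -x₀) ⁻¹' (LinearMap.ker a : Set E) := by
    ext x
    simp [sub_eq_zero, ← sub_eq_add_neg]
  rw [hker, measure_preimage_add_right]
  exact Measure.addHaar_submodule μ _ (by rwa [ne_eq, LinearMap.ker_eq_top])

section Paraboloid

variable {E : Type*} [NormedAddCommGroup E]

def paraboloidLift (x : E) : E × ℝ × ℝ := (x, ‖x‖ ^ 2, 1)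

theorem continuous_paraboloidLift : Continuous (paraboloidLift : E → E × ℝ × ℝ) :=
  continuous_id.prodMk ((continuous_norm.pow 2).prodMk continuous_const)

variable [InnerProductSpace ℝ E] [FiniteDimensional ℝ E] [MeasurableSpace E] [BorelSpace E]
  (μ : Measure E) [μ.IsAddHaarMeasure]

theorem addHaar_setOf_mul_sq_norm_add_inner_eq [Nontrivial E] {β : ℝ} (hβ : β ≠ 0) (w : E)
    (t : ℝ) : μ {x | β * ‖x‖ ^ 2 + ⟪w, x⟫ = t} = 0 := by
  -- completing the square: the set lies on the sphere of centre `z`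
  set z : E := -(2 * β)⁻¹ • w
  refine measure_mono_null (fun x hx => ?_) (Measure.addHaar_sphere μ z √(t / β + ‖z‖ ^ 2))
  have hx : β * ‖x‖ ^ 2 + ⟪w, x⟫ = t := hx
  have hsq : ‖x - z‖ ^ 2 = t / β + ‖z‖ ^ 2 := by
    rw [norm_sub_sq_real, real_inner_smul_right, real_inner_comm, ← hx]
    field_simp
    ring
  rw [Metric.mem_sphere, dist_eq_norm, ← hsq, Real.sqrt_sq (norm_nonneg _)]

theorem addHaar_setOf_map_paraboloidLift_eq_zero [Nontrivial E] {φ : E × ℝ × ℝ →ₗ[ℝ] ℝ}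
    (hφ : φ ≠ 0) : μ {x | φ (paraboloidLift x) = 0} = 0 := by
  set a := φ ∘ₗ LinearMap.inl ℝ E (ℝ × ℝ)
  set β := φ (0, 1, 0)
  set γ := φ (0, 0, 1)
  have hφ_apply (x : E) (s t : ℝ) : φ (x, s, t) = a x + s * β + t * γ := by
    rw [show ((x, s, t) : E × ℝ × ℝ) = (x, 0, 0) + s • (0, 1, 0) + t • (0, 0, 1) by simp,
      map_add, map_add, map_smul, map_smul, smul_eq_mul, smul_eq_mul]
    rfl
  have hlift (x : E) : φ (paraboloidLift x) = a x + ‖x‖ ^ 2 * β + γ := by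
    simp [paraboloidLift, hφ_apply]
  by_cases hβ : β = 0
  · by_cases ha : a = 0
    · have hγ : γ ≠ 0 := by
        rintro hγ
        refine hφ (LinearMap.ext fun ⟨x, s, t⟩ => ?_)
        simp [hφ_apply, ha, hβ, hγ]
      simp [hlift, ha, hβ, hγ]
    · simpa [hlift, hβ, eq_neg_iff_add_eq_zero] using addHaar_setOf_linear_eq μ ha (-γ)
  · obtain ⟨w, hw⟩ : ∃ w : E, ∀ x, a x = ⟪w, x⟫ :=
      ⟨(InnerProductSpace.toDual ℝ E).symm (LinearMap.toContinuousLinearMap a),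
        fun x => by simp [InnerProductSpace.toDual_symm_apply]⟩
    have hset : {x | φ (paraboloidLift x) = 0} = {x | β * ‖x‖ ^ 2 + ⟪w, x⟫ = -γ} := by
      ext x
      rw [Set.mem_ofPred_eq, Set.mem_ofPred_eq, hlift, hw]
      constructor <;> intro h <;> linarith
    rw [hset]
    exact addHaar_setOf_mul_sq_norm_add_inner_eq μ hβ w (-γ)

end Paraboloid

section GeneralPosition

variable {α V : Type*} [MeasurableSpace α] [NormedAddCommGroup V] [NormedSpace ℝ V]
  [FiniteDimensional ℝ V] [MeasurableSpace V] [BorelSpace V] {f : α → V}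

theorem measurableSet_setOf_linearIndependent_comp {β κ : Type*} [MeasurableSpace β] [Finite κ]
    (hf : Measurable f) {F : β → κ → α} (hF : Measurable F) :
    MeasurableSet {y | LinearIndependent ℝ (f ∘ F y)} :=
  isOpen_setOfPred_linearIndependent.measurableSet.preimage
    (measurable_pi_lambda _ fun j => hf.comp ((measurable_pi_apply j).comp hF))

theorem ae_linearIndependent_pi (hf : Measurable f) :
    ∀ {k : ℕ} (μ : Fin k → Measure α) [∀ j, SigmaFinite (μ j)],
      (∀ j, ∀ φ : V →ₗ[ℝ] ℝ, φ ≠ 0 → ∀ᵐ a ∂μ j, φ (f a) ≠ 0) → k ≤ finrank ℝ V →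
      ∀ᵐ x ∂Measure.pi μ, LinearIndependent ℝ (f ∘ x)
  | 0, _, _, _, _ => ae_of_all _ fun _ => linearIndependent_empty_type
  | k + 1, μ, _, hμ, hk => by
    have ih := ae_linearIndependent_pi hf (fun j => μ (Fin.succAbove 0 j)) (fun j => hμ _)
      (by omega)
    set e := MeasurableEquiv.piFinSuccAbove (fun _ => α) 0
    have hmeas := measurableSet_setOf_linearIndependent_comp hf e.symm.measurable
    suffices h : ∀ᵐ y ∂(μ 0).prod (Measure.pi fun j => μ (Fin.succAbove 0 j)),
        LinearIndependent ℝ (f ∘ e.symm y) by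
      simpa only [e, MeasurableEquiv.symm_apply_apply] using
        (measurePreserving_piFinSuccAbove μ 0).quasiMeasurePreserving.ae h
    rw [Measure.ae_prod_iff_ae_ae hmeas, Measure.ae_ae_comm hmeas]
    filter_upwards [ih] with xs hxs
    obtain ⟨φ, hφ, hspan⟩ := (Submodule.span ℝ (Set.range (f ∘ xs))).exists_le_ker_of_lt_top
      (Submodule.lt_top_of_finrank_lt_finrank ((finrank_range_le_card _).trans_lt (by simpa)))
    filter_upwards [hμ 0 φ hφ] with x₀ hx₀
    have : e.symm (x₀, xs) = Fin.cons x₀ xs := Fin.insertNth_zero' x₀ xs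
    rw [this, Fin.comp_cons, linearIndependent_finCons]
    exact ⟨hxs, fun hmem => hx₀ (hspan hmem)⟩

theorem ae_linearIndepOn_of_iIndepFun {Ω ι : Type*} [MeasurableSpace Ω] {ℙ : Measure Ω}
    [IsProbabilityMeasure ℙ] [Fintype ι] {X : ι → Ω → α} (hX : ∀ i, Measurable (X i))
    (hindep : ProbabilityTheory.iIndepFun X ℙ) (hf : Measurable f)
    (havoid : ∀ i, ∀ φ : V →ₗ[ℝ] ℝ, φ ≠ 0 → ∀ᵐ a ∂ℙ.map (X i), φ (f a) ≠ 0) :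
    ∀ᵐ ω ∂ℙ, ∀ T : Finset ι, #T ≤ finrank ℝ V → LinearIndepOn ℝ (fun i => f (X i ω)) T := by
  rw [ae_all_iff]
  intro T
  by_cases hT : #T ≤ finrank ℝ V
  swap
  · exact ae_of_all _ fun _ h => absurd h hT
  set e := T.equivFin.symm
  have : ∀ i, IsProbabilityMeasure (ℙ.map (X i)) := fun i =>
    Measure.isProbabilityMeasure_map (hX i).aemeasurable
  have hlaw : ℙ.map (fun ω j => X (e j) ω) = Measure.pi fun j => ℙ.map (X (e j)) :=
    (ProbabilityTheory.iIndepFun_iff_map_fun_eq_pi_map fun j => (hX (e j)).aemeasurable).1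
      (hindep.precomp (Subtype.val_injective.comp e.injective))
  have hgen := ae_linearIndependent_pi hf (fun j => ℙ.map (X (e j))) (fun j => havoid (e j)) hT
  rw [← hlaw] at hgen
  filter_upwards [ae_of_ae_map (measurable_pi_lambda _ fun j => hX (e j)).aemeasurable hgen]
    with ω hω _
  exact (linearIndependent_equiv e).1 hω

end GeneralPosition

theorem optimal_unbiased_weights_are_sparse_general
    {d n : ℕ} (hd : 1 ≤ d)
    {Ω : Type*} [MeasurableSpace Ω] (ℙ : Measure Ω) [IsProbabilityMeasure ℙ]
    (b : Fin n → Ω → EuclideanSpace ℝ (Fin d))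
    (hmeas : ∀ i, Measurable (b i))
    (hindep : ProbabilityTheory.iIndepFun b ℙ)
    (μ : Measure (EuclideanSpace ℝ (Fin d)))
    (hident : ∀ i, Measure.map (b i) ℙ = μ)
    (habs : μ ≪ volume) :
    ∀ᵐ ω ∂ℙ, ∀ p : Fin n → ℝ,
      (∀ i, 0 ≤ p i) → (∑ i, p i = 1) → (∑ i, p i • b i ω = 0) →
      (∀ q : Fin n → ℝ, (∀ i, 0 ≤ q i) → (∑ i, q i = 1) → (∑ i, q i • b i ω = 0) →
        ∑ i, p i * ‖b i ω‖ ^ 2 ≤ ∑ i, q i * ‖b i ω‖ ^ 2) →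
      (univ.filter fun i => p i ≠ 0).card ≤ d + 1 := by
  have : Nontrivial (EuclideanSpace ℝ (Fin d)) :=
    Module.nontrivial_of_finrank_pos (by rw [finrank_euclideanSpace_fin]; omega)
  have hgen := ae_linearIndepOn_of_iIndepFun hmeas hindep continuous_paraboloidLift.measurable
    fun i φ hφ => by
      rw [hident i]
      exact habs.ae_le
        (ae_iff.2 (by simpa using addHaar_setOf_map_paraboloidLift_eq_zero volume hφ))
  filter_upwards [hgen] with ω hω p hp0 hp1 hpb hmin
  simpa [finrank_euclideanSpace_fin] using card_support_le_of_isMinOn_unbiasedWeights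
    (x := fun i => b i ω) (c := fun i => ‖b i ω‖ ^ 2)
    (fun T hT => hω T (by simpa [finrank_prod] using hT)) ⟨⟨hp0, hp1⟩, hpb⟩
    fun q hq => hmin q hq.1.1 hq.1.2 hq.2

/-- **Theorem 1 of the paper.** If `b₁, …, bₙ` are i.i.d. random vectors in `ℝᵈ` whose common
law is absolutely continuous w.r.t. Lebesgue measure and `n > d ≥ 1`, then almost surely every
probability vector `p` that is unbiased (`∑ i, pᵢ bᵢ = 0`) and minimizes `∑ i, pᵢ ‖bᵢ‖²` among
all unbiased probability vectors is sparse, i.e. has at most `d + 1` nonzero entries. -/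
theorem optimal_unbiased_weights_are_sparse
    {d n : ℕ} (hd : 1 ≤ d) (hdn : d < n)
    {Ω : Type*} [MeasurableSpace Ω] (ℙ : Measure Ω) [IsProbabilityMeasure ℙ]
    (b : Fin n → Ω → EuclideanSpace ℝ (Fin d))
    (hmeas : ∀ i, Measurable (b i))
    (hindep : ProbabilityTheory.iIndepFun b ℙ)
    (μ : Measure (EuclideanSpace ℝ (Fin d)))
    (hident : ∀ i, Measure.map (b i) ℙ = μ)
    (habs : μ ≪ volume) :
    ∀ᵐ ω ∂ℙ, ∀ p : Fin n → ℝ,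
      (∀ i, 0 ≤ p i) → (∑ i, p i = 1) → (∑ i, p i • b i ω = 0) →
      (∀ q : Fin n → ℝ, (∀ i, 0 ≤ q i) → (∑ i, q i = 1) → (∑ i, q i • b i ω = 0) →
        ∑ i, p i * ‖b i ω‖ ^ 2 ≤ ∑ i, q i * ‖b i ω‖ ^ 2) →
      (univ.filter fun i => p i ≠ 0).card ≤ d + 1 :=
  optimal_unbiased_weights_are_sparse_general hd ℙ b hmeas hindep μ hident habs
end

section
/- Let n, d ≥ 1, let b₁, …, bₙ be i.i.d. square-integrable random vectors in ℝᵈ, and let p₁, …, pₙ be fixed nonnegative reals with Σᵢ pᵢ = 1. Then 𝔼[Σ_{i<j} ‖bᵢ − bⱼ‖² (pᵢpⱼ − 1/n²)] = 𝔼[‖b₁ − b₂‖²] · (Σ_{i<j} pᵢpⱼ − (n−1)/(2n)) ≤ 0. Moreover, if p is not the uniform vector (pᵢ = 1/n for all i) and 𝔼[‖b₁ − b₂‖²] > 0, the inequality is strict. -/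
/-!
Independence and identical distribution give every pair `i < j` the same expected squared
distance `M = 𝔼‖b₁ - b₂‖²`, so the expectation is `M * ∑_{i<j} (pᵢpⱼ - 1/n²)`. Expanding
`(∑ pᵢ)² = 1` gives `2 ∑_{i<j} pᵢpⱼ = 1 - ∑ pᵢ²`, whence `∑_{i<j} (pᵢpⱼ - 1/n²) = -½ ∑ (pᵢ - 1/n)²`.
-/

open MeasureTheory Finset

section PairSums

variable {ι : Type*} [Fintype ι] [LinearOrder ι] [LocallyFiniteOrderTop ι]
  [LocallyFiniteOrderBot ι]

theorem two_mul_sum_sum_Ioi_mul {R : Type*} [CommRing R] (p : ι → R) :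
    2 * ∑ i, ∑ j ∈ Ioi i, p i * p j = (∑ i, p i) ^ 2 - ∑ i, p i ^ 2 := by
  have hoff := sum_sum_Ioi_add_eq_sum_sum_off_diag fun j i ↦ p j * p i
  have hsq : (∑ i, p i) ^ 2 = ∑ i, (p i ^ 2 + ∑ j ∈ {i}ᶜ, p j * p i) := by
    rw [sq, Fintype.sum_mul_sum, sum_comm]
    refine sum_congr rfl fun i _ ↦ ?_
    rw [Fintype.sum_eq_add_sum_compl i, sq]
  rw [hsq, sum_add_distrib, ← hoff, add_sub_cancel_left]
  simp only [mul_sum, two_mul, mul_comm (p _) (p _)]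

theorem sum_sum_Ioi_mul_sub_eq_neg_half_sum_sq {p : ι → ℝ} (hp : ∑ i, p i = 1) :
    ∑ i, ∑ j ∈ Ioi i, p i * p j - ((Fintype.card ι : ℝ) - 1) / (2 * Fintype.card ι) =
      -(1 / 2) * ∑ i, (p i - 1 / Fintype.card ι) ^ 2 := by
  have : Nonempty ι := by
    by_contra h
    simp [not_nonempty_iff.mp h] at hp
  have hn : (Fintype.card ι : ℝ) ≠ 0 := by positivity
  have hsq : ∑ i, (p i - 1 / Fintype.card ι) ^ 2 = ∑ i, p i ^ 2 - 1 / Fintype.card ι := by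
    simp only [sub_sq, sum_add_distrib, sum_sub_distrib, ← sum_mul, ← mul_sum, hp, sum_const,
      card_univ, nsmul_eq_mul]
    field_simp
    ring
  have h := two_mul_sum_sum_Ioi_mul p
  rw [hp] at h
  rw [hsq]
  field_simp
  linear_combination (Fintype.card ι : ℝ) * h

theorem sum_sum_Ioi_one_div_card_sq :
    ∑ i : ι, ∑ _j ∈ Ioi i, (1 : ℝ) / Fintype.card ι ^ 2 =
      ((Fintype.card ι : ℝ) - 1) / (2 * Fintype.card ι) := by
  rcases isEmpty_or_nonempty ι with hι | hι
  · simp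
  have h := sum_sum_Ioi_mul_sub_eq_neg_half_sum_sq (p := fun _ : ι ↦ 1 / (Fintype.card ι : ℝ))
    (by simp)
  simpa [sq, sub_eq_zero] using h

end PairSums

namespace ProbabilityTheory

variable {Ω : Type*} [MeasurableSpace Ω] {P : Measure Ω}

theorem IndepFun.integral_comp_prodMk [IsFiniteMeasure P] {α β F : Type*} [MeasurableSpace α]
    [MeasurableSpace β] [NormedAddCommGroup F] [NormedSpace ℝ F] {X : Ω → α} {Y : Ω → β}
    (hXY : IndepFun X Y P) (hX : AEMeasurable X P) (hY : AEMeasurable Y P) {f : α × β → F}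
    (hf : AEStronglyMeasurable f ((P.map X).prod (P.map Y))) :
    ∫ ω, f (X ω, Y ω) ∂P = ∫ z, f z ∂((P.map X).prod (P.map Y)) := by
  rw [← hXY.map_prod_eq_prod_map_map hX hY] at hf ⊢
  exact (integral_map (hX.prodMk hY) hf).symm

theorem integral_sum_sum_Ioi_norm_sub_sq_mul [IsFiniteMeasure P] {ι E : Type*} [Fintype ι]
    [LinearOrder ι] [LocallyFiniteOrderTop ι] [NormedAddCommGroup E] [MeasurableSpace E]
    [BorelSpace E] [SecondCountableTopology E] {b : ι → Ω → E}
    (hindep : Pairwise fun i j ↦ IndepFun (b i) (b j) P) {ν : Measure E}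
    (hident : ∀ i, P.map (b i) = ν) (hL2 : ∀ i, MemLp (b i) 2 P) (c : ι → ι → ℝ) :
    ∫ ω, ∑ i, ∑ j ∈ Ioi i, ‖b i ω - b j ω‖ ^ 2 * c i j ∂P =
      (∫ z, ‖z.1 - z.2‖ ^ 2 ∂(ν.prod ν)) * ∑ i, ∑ j ∈ Ioi i, c i j := by
  have hint (i j : ι) : Integrable (fun ω ↦ ‖b i ω - b j ω‖ ^ 2) P :=
    ((hL2 i).sub (hL2 j)).integrable_norm_pow two_ne_zero
  have hpair {i j : ι} (hij : i ≠ j) :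
      ∫ ω, ‖b i ω - b j ω‖ ^ 2 ∂P = ∫ z, ‖z.1 - z.2‖ ^ 2 ∂(ν.prod ν) := by
    have h := (hindep hij).integral_comp_prodMk (hL2 i).aestronglyMeasurable.aemeasurable
      (hL2 j).aestronglyMeasurable.aemeasurable (f := fun z ↦ ‖z.1 - z.2‖ ^ 2)
      (by fun_prop)
    rwa [hident i, hident j] at h
  rw [integral_finsetSum _ fun i _ ↦ integrable_finsetSum _ fun j _ ↦ (hint i j).mul_const _,
    mul_sum]
  refine sum_congr rfl fun i _ ↦ ?_
  rw [integral_finsetSum _ fun j _ ↦ (hint i j).mul_const _, mul_sum]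
  refine sum_congr rfl fun j hj ↦ ?_
  rw [integral_mul_const, hpair (mem_Ioi.mp hj).ne, mul_comm]

end ProbabilityTheory

theorem expected_trace_covariance_nonuniform_le_uniform_general
    {n d : ℕ}
    {Ω : Type*} [MeasurableSpace Ω] (ℙ : Measure Ω) [IsProbabilityMeasure ℙ]
    (b : Fin n → Ω → EuclideanSpace ℝ (Fin d))
    (hindep : ProbabilityTheory.iIndepFun b ℙ)
    (ν : Measure (EuclideanSpace ℝ (Fin d)))
    (hident : ∀ i, Measure.map (b i) ℙ = ν)
    (hL2 : ∀ i, MemLp (b i) 2 ℙ)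
    (p : Fin n → ℝ) (hsum : ∑ i, p i = 1) :
    (∫ ω, (∑ i, ∑ j ∈ Ioi i, ‖b i ω - b j ω‖ ^ 2 * (p i * p j - 1 / (n : ℝ) ^ 2)) ∂ℙ =
        (∫ z, ‖z.1 - z.2‖ ^ 2 ∂(ν.prod ν)) *
          ((∑ i, ∑ j ∈ Ioi i, p i * p j) - ((n : ℝ) - 1) / (2 * n))) ∧
    (∫ ω, (∑ i, ∑ j ∈ Ioi i, ‖b i ω - b j ω‖ ^ 2 * (p i * p j - 1 / (n : ℝ) ^ 2)) ∂ℙ ≤ 0) ∧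
    ((¬ ∀ i, p i = 1 / n) → 0 < ∫ z, ‖z.1 - z.2‖ ^ 2 ∂(ν.prod ν) →
      ∫ ω, (∑ i, ∑ j ∈ Ioi i, ‖b i ω - b j ω‖ ^ 2 * (p i * p j - 1 / (n : ℝ) ^ 2)) ∂ℙ < 0) := by
  have hE := ProbabilityTheory.integral_sum_sum_Ioi_norm_sub_sq_mul
    (fun i j hij ↦ hindep.indepFun hij) hident hL2 fun i j ↦ p i * p j - 1 / (n : ℝ) ^ 2
  have hcentered : ∑ i, ∑ j ∈ Ioi i, (p i * p j - 1 / (n : ℝ) ^ 2) =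
      ∑ i, ∑ j ∈ Ioi i, p i * p j - ((n : ℝ) - 1) / (2 * n) := by
    have huniform := sum_sum_Ioi_one_div_card_sq (ι := Fin n)
    rw [Fintype.card_fin] at huniform
    simp only [sum_sub_distrib, huniform]
  have hdev := sum_sum_Ioi_mul_sub_eq_neg_half_sum_sq hsum
  rw [Fintype.card_fin] at hdev
  have hM : 0 ≤ ∫ z, ‖z.1 - z.2‖ ^ 2 ∂(ν.prod ν) := integral_nonneg fun _ ↦ by positivity
  rw [hE, hcentered, hdev]
  refine ⟨rfl, mul_nonpos_of_nonneg_of_nonpos hM ?_,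
    fun hne hMpos ↦ mul_neg_of_pos_of_neg hMpos ?_⟩
  · have := sum_nonneg fun i (_ : i ∈ univ) ↦ sq_nonneg (p i - 1 / n)
    linarith
  · obtain ⟨i, hi⟩ := not_forall.mp hne
    have : 0 < ∑ i, (p i - 1 / n) ^ 2 :=
      sum_pos' (fun _ _ ↦ sq_nonneg _) ⟨i, mem_univ i, by positivity [sub_ne_zero.mpr hi]⟩
    linarith

/-- **𝔼[Δ] ≤ 0 part of Theorem 2.** For i.i.d. square-integrable random vectors
`b₁, …, bₙ` in `ℝᵈ` with common law `ν` and fixed probability weights `p`,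
`𝔼[∑_{i<j} ‖bᵢ − bⱼ‖² (pᵢpⱼ − 1/n²)] = 𝔼[‖b₁ − b₂‖²] (∑_{i<j} pᵢpⱼ − (n−1)/(2n)) ≤ 0`,
with strict inequality when `p` is not uniform and `𝔼[‖b₁ − b₂‖²] > 0`.
Here `𝔼[‖b₁ − b₂‖²]` is written as the integral of `‖z₁ − z₂‖²` against `ν × ν`. -/
theorem expected_trace_covariance_nonuniform_le_uniform
    {n d : ℕ} (hn : 1 ≤ n) (hd : 1 ≤ d)
    {Ω : Type*} [MeasurableSpace Ω] (ℙ : Measure Ω) [IsProbabilityMeasure ℙ]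
    (b : Fin n → Ω → EuclideanSpace ℝ (Fin d))
    (hmeas : ∀ i, Measurable (b i))
    (hindep : ProbabilityTheory.iIndepFun b ℙ)
    (ν : Measure (EuclideanSpace ℝ (Fin d))) [IsProbabilityMeasure ν]
    (hident : ∀ i, Measure.map (b i) ℙ = ν)
    (hL2 : ∀ i, MemLp (b i) 2 ℙ)
    (p : Fin n → ℝ) (hp : ∀ i, 0 ≤ p i) (hsum : ∑ i, p i = 1) :
    (∫ ω, (∑ i, ∑ j ∈ Ioi i, ‖b i ω - b j ω‖ ^ 2 * (p i * p j - 1 / (n : ℝ) ^ 2)) ∂ℙ =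
        (∫ z, ‖z.1 - z.2‖ ^ 2 ∂(ν.prod ν)) *
          ((∑ i, ∑ j ∈ Ioi i, p i * p j) - ((n : ℝ) - 1) / (2 * n))) ∧
    (∫ ω, (∑ i, ∑ j ∈ Ioi i, ‖b i ω - b j ω‖ ^ 2 * (p i * p j - 1 / (n : ℝ) ^ 2)) ∂ℙ ≤ 0) ∧
    ((¬ ∀ i, p i = 1 / n) → 0 < ∫ z, ‖z.1 - z.2‖ ^ 2 ∂(ν.prod ν) →
      ∫ ω, (∑ i, ∑ j ∈ Ioi i, ‖b i ω - b j ω‖ ^ 2 * (p i * p j - 1 / (n : ℝ) ^ 2)) ∂ℙ < 0) :=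
  expected_trace_covariance_nonuniform_le_uniform_general ℙ b hindep ν hident hL2 p hsum
end

section
/- Fix d, n ≥ 1, reals R > 0, σ > 0, a vector y ∈ ℝᵈ, and set F = −1/σ². For h > 0 and b = (b₁, …, bₙ) ∈ (ℝᵈ)ⁿ define the unnormalized weights p̃ᵢ(b) = exp(F h [‖y + (1/n)Σⱼ bⱼ‖²/2 − ‖y + bᵢ‖²/2]), the normalized weights pᵢ(b) = p̃ᵢ(b)/Σₖ p̃ₖ(b), and the functional f(b) = Σ_{i<j} ‖bᵢ − bⱼ‖² (pᵢ(b)pⱼ(b) − 1/n²). Then there exists a constant C > 0, depending only on R, ‖y‖ and σ but not on n nor on h, such that for every h ∈ (0, 1], every index i, and all tuples b, b̂ ∈ (ℝᵈ)ⁿ with all components of norm at most R that differ only in the i-th component, one has |f(b) − f(b̂)| ≤ C h. -/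
open Finset

/-- Unnormalized EWSG weight `p̃ᵢ(b) = exp(F h (‖y + (1/n)∑ⱼ bⱼ‖²/2 − ‖y + bᵢ‖²/2))`
with `F = −1/σ²`. -/
noncomputable def ewsgUnnormWeight (σ h : ℝ) {d n : ℕ}
    (y : EuclideanSpace ℝ (Fin d)) (b : Fin n → EuclideanSpace ℝ (Fin d)) (i : Fin n) : ℝ :=
  Real.exp ((-1 / σ ^ 2) * h *
    (‖y + (n : ℝ)⁻¹ • ∑ j, b j‖ ^ 2 / 2 - ‖y + b i‖ ^ 2 / 2))

/-- Normalized EWSG weight `pᵢ(b) = p̃ᵢ(b) / ∑ₖ p̃ₖ(b)`. -/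
noncomputable def ewsgWeight (σ h : ℝ) {d n : ℕ}
    (y : EuclideanSpace ℝ (Fin d)) (b : Fin n → EuclideanSpace ℝ (Fin d)) (i : Fin n) : ℝ :=
  ewsgUnnormWeight σ h y b i / ∑ k, ewsgUnnormWeight σ h y b k

/-- `f(b) = ∑_{i<j} ‖bᵢ − bⱼ‖² (pᵢ(b)pⱼ(b) − 1/n²)`, the difference between the trace of the
covariance of the EWSG-subsampled gradient and that of the uniformly subsampled one. -/
noncomputable def ewsgVarDiff (σ h : ℝ) {d n : ℕ}
    (y : EuclideanSpace ℝ (Fin d)) (b : Fin n → EuclideanSpace ℝ (Fin d)) : ℝ :=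
  ∑ i, ∑ j ∈ Ioi i, ‖b i - b j‖ ^ 2 *
    (ewsgWeight σ h y b i * ewsgWeight σ h y b j - 1 / (n : ℝ) ^ 2)

/-!
Every exponent of the unnormalized weights is at most `h M` in absolute value, with
`M = (‖y‖ + R)² / (2σ²)`, since both `y + bᵢ` and `y + (1/n) ∑ⱼ bⱼ` have norm at most `‖y‖ + R`.
Hence each normalized weight lies within a factor `exp (2 h M)` of `1/n`, and each product `pᵢ pⱼ`
within a factor `exp (4 h M)` of `1/n²`. Every summand of `f` is therefore at most
`4R² (exp (4 h M) - 1) / n²`, and there are fewer than `n²` of them, so `|f(b)| = O(h)` uniformly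
in `n`; the bounded difference follows from the triangle inequality.
-/

theorem Real.exp_sub_one_le_mul_exp (x : ℝ) : Real.exp x - 1 ≤ x * Real.exp x := by
  have hx := Real.add_one_le_exp (-x)
  have h1 : Real.exp (-x) * Real.exp x = 1 := by rw [← Real.exp_add, neg_add_cancel, Real.exp_zero]
  nlinarith [Real.exp_pos x]

theorem abs_sub_le_of_exp_neg_mul_le_of_le_exp_mul {u c t : ℝ} (hc : 0 ≤ c)
    (hlo : Real.exp (-t) * c ≤ u) (hhi : u ≤ Real.exp t * c) :
    |u - c| ≤ (Real.exp t - 1) * c := by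
  have hcosh : 1 - Real.exp (-t) ≤ Real.exp t - 1 := by
    nlinarith [Real.add_one_le_exp t, Real.add_one_le_exp (-t)]
  rw [abs_le]
  constructor <;> nlinarith

section WeightRatio

variable {ι : Type*} [Fintype ι] {w : ι → ℝ} {m M : ℝ}

theorem div_le_div_sum_of_le (hm : 0 < m) (hlo : ∀ k, m ≤ w k) (hhi : ∀ k, w k ≤ M) (i : ι) :
    m / (Fintype.card ι * M) ≤ w i / ∑ k, w k := by
  have hsum : ∑ k, w k ≤ Fintype.card ι * M := by
    simpa using sum_le_card_nsmul univ w M fun k _ => hhi k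
  have hpos : 0 < ∑ k, w k := sum_pos (fun k _ => hm.trans_le (hlo k)) ⟨i, mem_univ i⟩
  exact div_le_div₀ (hm.trans_le (hlo i)).le (hlo i) hpos hsum

theorem div_sum_le_div_of_le (hm : 0 < m) (hlo : ∀ k, m ≤ w k) (hhi : ∀ k, w k ≤ M) (i : ι) :
    w i / ∑ k, w k ≤ M / (Fintype.card ι * m) := by
  have hsum : Fintype.card ι * m ≤ ∑ k, w k := by
    simpa using card_nsmul_le_sum univ w m fun k _ => hlo k
  have hcard : (0 : ℝ) < Fintype.card ι := by
    have : Nonempty ι := ⟨i⟩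
    exact_mod_cast Fintype.card_pos
  exact div_le_div₀ (hm.trans_le ((hlo i).trans (hhi i))).le (hhi i) (by positivity) hsum

theorem abs_div_sum_mul_div_sum_sub_le {a : ℝ}
    (hw : ∀ k, Real.exp (-a) ≤ w k ∧ w k ≤ Real.exp a) (i j : ι) :
    |(w i / ∑ k, w k) * (w j / ∑ k, w k) - 1 / (Fintype.card ι : ℝ) ^ 2| ≤
      (Real.exp (4 * a) - 1) / (Fintype.card ι : ℝ) ^ 2 := by
  have hlo k := (hw k).1
  have hhi k := (hw k).2
  have hm := Real.exp_pos (-a)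
  set q : ℝ := 1 / Fintype.card ι
  have hp_lo k : Real.exp (-(2 * a)) * q ≤ w k / ∑ l, w l := by
    convert div_le_div_sum_of_le hm hlo hhi k using 1
    rw [show -(2 * a) = -a - a by ring, Real.exp_sub]; ring
  have hp_hi k : w k / ∑ l, w l ≤ Real.exp (2 * a) * q := by
    convert div_sum_le_div_of_le hm hlo hhi k using 1
    rw [show 2 * a = a - -a by ring, Real.exp_sub]; ring
  have hp_nonneg k : 0 ≤ w k / ∑ l, w l :=
    div_nonneg (hm.trans_le (hlo k)).le (sum_nonneg fun l _ => (hm.trans_le (hlo l)).le)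
  have key : |(w i / ∑ k, w k) * (w j / ∑ k, w k) - q ^ 2| ≤ (Real.exp (4 * a) - 1) * q ^ 2 := by
    refine abs_sub_le_of_exp_neg_mul_le_of_le_exp_mul (by positivity) ?_ ?_
    · calc Real.exp (-(4 * a)) * q ^ 2 = (Real.exp (-(2 * a)) * q) * (Real.exp (-(2 * a)) * q) := by
            rw [show -(4 * a) = -(2 * a) + -(2 * a) by ring, Real.exp_add]; ring
        _ ≤ _ := by gcongr <;> first | positivity | exact hp_lo _ | exact hp_nonneg _
    · calc _ ≤ (Real.exp (2 * a) * q) * (Real.exp (2 * a) * q) := by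
            gcongr <;> first | exact hp_hi _ | exact hp_nonneg _
        _ = Real.exp (4 * a) * q ^ 2 := by
            rw [show 4 * a = 2 * a + 2 * a by ring, Real.exp_add]; ring
  simpa only [q, div_pow, one_pow, mul_one_div] using key

end WeightRatio

theorem abs_sum_sum_Ioi_le {ι : Type*} [Fintype ι] [Preorder ι] [LocallyFiniteOrderTop ι]
    {g : ι → ι → ℝ} {B : ℝ} (hg : ∀ i j, |g i j| ≤ B) :
    |∑ i, ∑ j ∈ Ioi i, g i j| ≤ (Fintype.card ι : ℝ) ^ 2 * B := by
  obtain hι | ⟨⟨i₀⟩⟩ := isEmpty_or_nonempty ι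
  · simp
  have hB : 0 ≤ B := (abs_nonneg _).trans (hg i₀ i₀)
  calc |∑ i, ∑ j ∈ Ioi i, g i j| ≤ ∑ i, ∑ j ∈ Ioi i, |g i j| :=
        (abs_sum_le_sum_abs _ _).trans (sum_le_sum fun i _ => abs_sum_le_sum_abs _ _)
    _ ≤ ∑ i : ι, ∑ j : ι, B :=
        sum_le_sum fun i _ => (sum_le_sum fun j _ => hg i j).trans
          (sum_le_sum_of_subset_of_nonneg (subset_univ _) fun _ _ _ => hB)
    _ = (Fintype.card ι : ℝ) ^ 2 * B := by simp [sq, mul_assoc]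

theorem norm_inv_smul_sum_le {E : Type*} [SeminormedAddCommGroup E] [NormedSpace ℝ E] {n : ℕ}
    {b : Fin n → E} {R : ℝ} (hR : 0 ≤ R) (hb : ∀ j, ‖b j‖ ≤ R) :
    ‖(n : ℝ)⁻¹ • ∑ j, b j‖ ≤ R := by
  calc ‖(n : ℝ)⁻¹ • ∑ j, b j‖ ≤ (n : ℝ)⁻¹ * (n * R) := by
        rw [norm_smul, norm_inv, RCLike.norm_natCast]
        gcongr
        simpa using (norm_sum_le _ _).trans (sum_le_card_nsmul univ _ R fun j _ => hb j)
    _ = ((n : ℝ)⁻¹ * n) * R := by ring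
    _ ≤ R := mul_le_of_le_one_left hR (inv_mul_le_one)

noncomputable def ewsgExponentBound (σ R : ℝ) {d : ℕ} (y : EuclideanSpace ℝ (Fin d)) : ℝ :=
  (‖y‖ + R) ^ 2 / (2 * σ ^ 2)

theorem ewsgExponentBound_nonneg (σ R : ℝ) {d : ℕ} (y : EuclideanSpace ℝ (Fin d)) :
    0 ≤ ewsgExponentBound σ R y := by
  unfold ewsgExponentBound; positivity

theorem ewsgExponentBound_pos {σ R : ℝ} {d : ℕ} (y : EuclideanSpace ℝ (Fin d)) (hσ : σ ≠ 0)
    (hR : 0 < R) : 0 < ewsgExponentBound σ R y := by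
  unfold ewsgExponentBound; positivity

section EWSG

variable {d n : ℕ} {σ h R : ℝ} {y : EuclideanSpace ℝ (Fin d)} {b : Fin n → EuclideanSpace ℝ (Fin d)}

theorem abs_ewsgExponent_le (hh : 0 ≤ h) (hR : 0 ≤ R) (hb : ∀ j, ‖b j‖ ≤ R) (i : Fin n) :
    |(-1 / σ ^ 2) * h * (‖y + (n : ℝ)⁻¹ • ∑ j, b j‖ ^ 2 / 2 - ‖y + b i‖ ^ 2 / 2)| ≤
      h * ewsgExponentBound σ R y := by
  have hsq {v : EuclideanSpace ℝ (Fin d)} (hv : ‖v‖ ≤ R) : ‖y + v‖ ^ 2 ≤ (‖y‖ + R) ^ 2 := by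
    gcongr; exact (norm_add_le _ _).trans (by linarith)
  have havg := hsq (norm_inv_smul_sum_le hR hb)
  have hi := hsq (hb i)
  have hdiff : |‖y + (n : ℝ)⁻¹ • ∑ j, b j‖ ^ 2 / 2 - ‖y + b i‖ ^ 2 / 2| ≤ (‖y‖ + R) ^ 2 / 2 := by
    rw [abs_le]; constructor <;> nlinarith [sq_nonneg ‖y + b i‖, sq_nonneg ‖y + (n : ℝ)⁻¹ • ∑ j, b j‖]
  rw [abs_mul, abs_mul, abs_of_nonneg hh, abs_div, abs_neg, abs_one, abs_sq]
  calc 1 / σ ^ 2 * h * _ ≤ 1 / σ ^ 2 * h * ((‖y‖ + R) ^ 2 / 2) := by gcongr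
    _ = h * ewsgExponentBound σ R y := by rw [ewsgExponentBound]; ring

theorem abs_ewsgWeight_mul_sub_le (hh : 0 ≤ h) (hR : 0 ≤ R) (hb : ∀ j, ‖b j‖ ≤ R) (i j : Fin n) :
    |ewsgWeight σ h y b i * ewsgWeight σ h y b j - 1 / (n : ℝ) ^ 2| ≤
      (Real.exp (4 * (h * ewsgExponentBound σ R y)) - 1) / (n : ℝ) ^ 2 := by
  have hw k : Real.exp (-(h * ewsgExponentBound σ R y)) ≤ ewsgUnnormWeight σ h y b k ∧
      ewsgUnnormWeight σ h y b k ≤ Real.exp (h * ewsgExponentBound σ R y) := by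
    obtain ⟨hlo, hhi⟩ := abs_le.mp (abs_ewsgExponent_le (σ := σ) (y := y) hh hR hb k)
    exact ⟨Real.exp_le_exp.mpr hlo, Real.exp_le_exp.mpr hhi⟩
  simpa only [ewsgWeight, Fintype.card_fin] using abs_div_sum_mul_div_sum_sub_le hw i j

theorem abs_ewsgVarDiff_le (hh : 0 ≤ h) (hR : 0 ≤ R) (hb : ∀ j, ‖b j‖ ≤ R) :
    |ewsgVarDiff σ h y b| ≤
      4 * R ^ 2 * (Real.exp (4 * (h * ewsgExponentBound σ R y)) - 1) := by
  have hterm i j : |‖b i - b j‖ ^ 2 *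
      (ewsgWeight σ h y b i * ewsgWeight σ h y b j - 1 / (n : ℝ) ^ 2)| ≤
      4 * R ^ 2 * ((Real.exp (4 * (h * ewsgExponentBound σ R y)) - 1) / (n : ℝ) ^ 2) := by
    have hdist : ‖b i - b j‖ ^ 2 ≤ 4 * R ^ 2 := by
      have := (norm_sub_le (b i) (b j)).trans (add_le_add (hb i) (hb j))
      nlinarith [norm_nonneg (b i - b j)]
    rw [abs_mul, abs_of_nonneg (by positivity)]
    exact mul_le_mul hdist (abs_ewsgWeight_mul_sub_le hh hR hb i j) (abs_nonneg _) (by positivity)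
  calc |ewsgVarDiff σ h y b| ≤ (n : ℝ) ^ 2 *
        (4 * R ^ 2 * ((Real.exp (4 * (h * ewsgExponentBound σ R y)) - 1) / (n : ℝ) ^ 2)) := by
        simpa only [ewsgVarDiff, Fintype.card_fin] using abs_sum_sum_Ioi_le hterm
    _ = ((n : ℝ) ^ 2 * ((n : ℝ) ^ 2)⁻¹) *
        (4 * R ^ 2 * (Real.exp (4 * (h * ewsgExponentBound σ R y)) - 1)) := by ring
    _ ≤ _ := by
        refine mul_le_of_le_one_left ?_ mul_inv_le_one
        have := ewsgExponentBound_nonneg σ R y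
        exact mul_nonneg (by positivity) (sub_nonneg.mpr (Real.one_le_exp (by positivity)))

theorem abs_ewsgVarDiff_le_mul (hh₀ : 0 ≤ h) (hh₁ : h ≤ 1) (hR : 0 ≤ R)
    (hb : ∀ j, ‖b j‖ ≤ R) :
    |ewsgVarDiff σ h y b| ≤ 4 * R ^ 2 * (4 * ewsgExponentBound σ R y *
      Real.exp (4 * ewsgExponentBound σ R y)) * h := by
  set M := ewsgExponentBound σ R y
  have hM : 0 ≤ M := ewsgExponentBound_nonneg σ R y
  calc |ewsgVarDiff σ h y b| ≤ 4 * R ^ 2 * (Real.exp (4 * (h * M)) - 1) :=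
        abs_ewsgVarDiff_le hh₀ hR hb
    _ ≤ 4 * R ^ 2 * (4 * (h * M) * Real.exp (4 * (h * M))) := by
        gcongr; exact Real.exp_sub_one_le_mul_exp _
    _ ≤ 4 * R ^ 2 * (4 * (h * M) * Real.exp (4 * M)) := by
        gcongr; exact mul_le_of_le_one_left (by positivity) hh₁
    _ = 4 * R ^ 2 * (4 * M * Real.exp (4 * M)) * h := by ring

end EWSG

theorem ewsgVarDiff_bounded_differences_general
    (d : ℕ) (R σ : ℝ) (hR : 0 < R) (hσ : 0 < σ)
    (y : EuclideanSpace ℝ (Fin d)) :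
    ∃ C > 0, ∀ n : ℕ, 1 ≤ n → ∀ h : ℝ, 0 < h → h ≤ 1 → ∀ i : Fin n,
      ∀ b bhat : Fin n → EuclideanSpace ℝ (Fin d),
        (∀ j, ‖b j‖ ≤ R) → (∀ j, ‖bhat j‖ ≤ R) → (∀ j, j ≠ i → b j = bhat j) →
        |ewsgVarDiff σ h y b - ewsgVarDiff σ h y bhat| ≤ C * h := by
  set K := 4 * R ^ 2 * (4 * ewsgExponentBound σ R y *
    Real.exp (4 * ewsgExponentBound σ R y))
  have := ewsgExponentBound_pos y hσ.ne' hR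
  refine ⟨2 * K, by positivity, fun n _ h hh₀ hh₁ _ b bhat hb hbhat _ => ?_⟩
  calc |ewsgVarDiff σ h y b - ewsgVarDiff σ h y bhat|
      ≤ |ewsgVarDiff σ h y b| + |ewsgVarDiff σ h y bhat| := abs_sub _ _
    _ ≤ K * h + K * h := add_le_add (abs_ewsgVarDiff_le_mul hh₀.le hh₁ hR.le hb)
        (abs_ewsgVarDiff_le_mul hh₀.le hh₁ hR.le hbhat)
    _ = 2 * K * h := by ring

/-- **Bounded-differences estimate for EWSG (proof of Theorem 2).** There is a constant
`C > 0` depending only on `R`, `‖y‖` and `σ` (not on `n` nor on `h ∈ (0,1]`) such that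
changing a single coordinate of `b` (all coordinates bounded by `R`) changes
`f(b) = ewsgVarDiff σ h y b` by at most `C h`. -/
theorem ewsgVarDiff_bounded_differences
    (d : ℕ) (hd : 1 ≤ d) (R σ : ℝ) (hR : 0 < R) (hσ : 0 < σ)
    (y : EuclideanSpace ℝ (Fin d)) :
    ∃ C > 0, ∀ n : ℕ, 1 ≤ n → ∀ h : ℝ, 0 < h → h ≤ 1 → ∀ i : Fin n,
      ∀ b bhat : Fin n → EuclideanSpace ℝ (Fin d),
        (∀ j, ‖b j‖ ≤ R) → (∀ j, ‖bhat j‖ ≤ R) → (∀ j, j ≠ i → b j = bhat j) →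
        |ewsgVarDiff σ h y b - ewsgVarDiff σ h y bhat| ≤ C * h :=
  ewsgVarDiff_bounded_differences_general d R σ hR hσ y
end

section
/- Let 0 < γ < 2, let A = [[0, 1], [−1, −γ]], let p ≥ 1 be a natural number and C₀ > 0 a constant. Then there exist h₀ > 0 and Ĉ > 0 such that for every step size h ∈ (0, h₀), the following holds. Let (e_k)_{k≥0} be any sequence in ℝ² with ‖e_k‖ ≤ C₀ h^p for all k, and define x_{k+1} = (I + hA) x_k + h e_k and x'_k = (I + hA)^k x₀ with x₀ = x'₀ ∈ ℝ². Then: (i) ‖x'_k‖ → 0 as k → ∞ (indeed ‖x'_k‖ converges to 0 geometrically), and (ii) ‖x_k − x'_k‖ ≤ Ĉ h^p for all k ≥ 0. -/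
/-!
In the coordinates `(θ, r + γθ/2)` the drift `A` becomes `[[-γ/2, 1], [γ²/4 - 1, -γ/2]]`, whose
symmetric part has eigenvalues `-γ/2 ± γ²/8 ≤ -γ/4` when `γ < 2`. Hence the Euclidean norm in
these coordinates, a norm equivalent to the standard one up to the factor `2`, is contracted by the
Euler step `I + hA` with factor `1 - γh/8` once `h ≤ γ/16`. Geometric decay of `x'_k` follows, and
the difference `x_k - x'_k`, which starts at `0` and obeys the same step with forcing `h e_k`,
stays below `2 · 2h · C₀hᵖ / (1 - (1 - γh/8)) = 32 C₀ hᵖ / γ`.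
-/

open Filter

theorem le_div_one_sub_of_le_mul_add {u : ℕ → ℝ} {r c : ℝ} (hr0 : 0 ≤ r) (hr1 : r < 1)
    (h0 : u 0 ≤ c / (1 - r)) (hu : ∀ k, u (k + 1) ≤ r * u k + c) (k : ℕ) :
    u k ≤ c / (1 - r) := by
  induction k with
  | zero => exact h0
  | succ k ih =>
    calc u (k + 1) ≤ r * (c / (1 - r)) + c := (hu k).trans (by gcongr)
      _ = c / (1 - r) := by field_simp [(sub_pos.2 hr1).ne']; ring

theorem seminorm_sub_le_of_perturbed {E F G : Type*} [AddCommGroup E] [FunLike F E ℝ]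
    [AddGroupSeminormClass F E ℝ] [FunLike G E E] [AddMonoidHomClass G E E] {N : F} {S : G}
    {r c : ℝ} (hr0 : 0 ≤ r) (hr1 : r < 1) (hS : ∀ v, N (S v) ≤ r * N v)
    {f y y' : ℕ → E} (hf : ∀ k, N (f k) ≤ c) (hy : ∀ k, y (k + 1) = S (y k) + f k)
    (hy' : ∀ k, y' (k + 1) = S (y' k)) (h0 : y 0 = y' 0) (k : ℕ) :
    N (y k - y' k) ≤ c / (1 - r) := by
  refine le_div_one_sub_of_le_mul_add (u := fun k ↦ N (y k - y' k)) hr0 hr1 ?_ (fun j ↦ ?_) k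
  · have hc : 0 ≤ c := (apply_nonneg N _).trans (hf 0)
    simpa [h0] using div_nonneg hc (sub_nonneg.2 hr1.le)
  · calc N (y (j + 1) - y' (j + 1)) = N (S (y j - y' j) + f j) := by
          rw [hy, hy', map_sub S]; abel_nf
      _ ≤ r * N (y j - y' j) + c := (map_add_le_add N _ _).trans (add_le_add (hS _) (hf j))

noncomputable def langevinStep (γ h : ℝ) :
    EuclideanSpace ℝ (Fin 2) →ₗ[ℝ] EuclideanSpace ℝ (Fin 2) :=
  LinearMap.id + h • Matrix.toEuclideanLin !![0, 1; -1, -γ]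

noncomputable def lyapunovSeminorm (γ : ℝ) : Seminorm ℝ (EuclideanSpace ℝ (Fin 2)) :=
  (normSeminorm ℝ _).comp (Matrix.toEuclideanLin !![1, 0; γ / 2, 1])

theorem langevinStep_apply (γ h : ℝ) (v : EuclideanSpace ℝ (Fin 2)) :
    langevinStep γ h v = v + h • Matrix.toEuclideanLin !![0, 1; -1, -γ] v := rfl

theorem langevinStep_apply_zero (γ h : ℝ) (v : EuclideanSpace ℝ (Fin 2)) :
    langevinStep γ h v 0 = v 0 + h * v 1 := by
  simp [langevinStep_apply, Matrix.toLpLin_apply, dotProduct]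

theorem langevinStep_apply_one (γ h : ℝ) (v : EuclideanSpace ℝ (Fin 2)) :
    langevinStep γ h v 1 = v 1 - h * (v 0 + γ * v 1) := by
  simp [langevinStep_apply, Matrix.toLpLin_apply, dotProduct]
  ring

theorem lyapunovSeminorm_sq (γ : ℝ) (v : EuclideanSpace ℝ (Fin 2)) :
    lyapunovSeminorm γ v ^ 2 = v 0 ^ 2 + (γ / 2 * v 0 + v 1) ^ 2 := by
  simp [lyapunovSeminorm, EuclideanSpace.real_norm_sq_eq, Matrix.toLpLin_apply, dotProduct]

theorem EuclideanSpace.norm_sq_fin_two (v : EuclideanSpace ℝ (Fin 2)) :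
    ‖v‖ ^ 2 = v 0 ^ 2 + v 1 ^ 2 := by
  simp [EuclideanSpace.real_norm_sq_eq]

theorem lyapunovSeminorm_le {γ : ℝ} (hγ : γ ^ 2 ≤ 4) (v : EuclideanSpace ℝ (Fin 2)) :
    lyapunovSeminorm γ v ≤ 2 * ‖v‖ := by
  refine (pow_le_pow_iff_left₀ (apply_nonneg _ _) (by positivity) two_ne_zero).1 ?_
  rw [mul_pow, lyapunovSeminorm_sq, EuclideanSpace.norm_sq_fin_two]
  nlinarith [sq_nonneg (γ / 2 * v 0 - v 1), mul_le_mul_of_nonneg_right hγ (sq_nonneg (v 0))]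

theorem norm_le_lyapunovSeminorm {γ : ℝ} (hγ : γ ^ 2 ≤ 4) (v : EuclideanSpace ℝ (Fin 2)) :
    ‖v‖ ≤ 2 * lyapunovSeminorm γ v := by
  refine (pow_le_pow_iff_left₀ (norm_nonneg _) (by positivity) two_ne_zero).1 ?_
  rw [mul_pow, lyapunovSeminorm_sq, EuclideanSpace.norm_sq_fin_two]
  nlinarith [sq_nonneg (γ / 2 * v 0 + 2 * v 1), mul_le_mul_of_nonneg_right hγ (sq_nonneg (v 0))]

theorem lyapunov_step_sq_le {γ h : ℝ} (hγ0 : 0 < γ) (hγ2 : γ < 2) (hh : 0 < h)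
    (hhγ : h ≤ γ / 16) (a s : ℝ) :
    (a + h * (s - γ / 2 * a)) ^ 2 + (s - h * ((1 - γ ^ 2 / 4) * a + γ / 2 * s)) ^ 2
      ≤ (1 - γ * h / 8) ^ 2 * (a ^ 2 + s ^ 2) := by
  have hdissip : a * (s - γ / 2 * a) - s * ((1 - γ ^ 2 / 4) * a + γ / 2 * s)
      ≤ -(γ / 4) * (a ^ 2 + s ^ 2) := by
    nlinarith [mul_nonneg (mul_nonneg hγ0.le (sub_nonneg.2 hγ2.le)) (sq_nonneg (a + s)),
      mul_nonneg (mul_nonneg hγ0.le (sub_nonneg.2 hγ2.le)) (sq_nonneg (a - s)),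
      mul_nonneg (mul_nonneg hγ0.le hγ0.le) (sq_nonneg (a - s))]
  have hgrowth : (s - γ / 2 * a) ^ 2 + ((1 - γ ^ 2 / 4) * a + γ / 2 * s) ^ 2
      ≤ 4 * (a ^ 2 + s ^ 2) := by
    have hg : (γ / 2) ^ 2 ≤ 1 := by nlinarith
    have hκ : (1 - γ ^ 2 / 4) ^ 2 ≤ 1 := by nlinarith
    nlinarith [sq_nonneg (s + γ / 2 * a), sq_nonneg ((1 - γ ^ 2 / 4) * a - γ / 2 * s),
      mul_le_mul_of_nonneg_right hg (sq_nonneg a), mul_le_mul_of_nonneg_right hg (sq_nonneg s),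
      mul_le_mul_of_nonneg_right hκ (sq_nonneg a)]
  have hq : 0 ≤ a ^ 2 + s ^ 2 := by positivity
  calc _ = (a ^ 2 + s ^ 2)
        + 2 * h * (a * (s - γ / 2 * a) - s * ((1 - γ ^ 2 / 4) * a + γ / 2 * s))
        + h ^ 2 * ((s - γ / 2 * a) ^ 2 + ((1 - γ ^ 2 / 4) * a + γ / 2 * s) ^ 2) := by ring
    _ ≤ (a ^ 2 + s ^ 2) + 2 * h * (-(γ / 4) * (a ^ 2 + s ^ 2))
        + h ^ 2 * (4 * (a ^ 2 + s ^ 2)) := by gcongr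
    _ ≤ (1 - γ * h / 8) ^ 2 * (a ^ 2 + s ^ 2) := by
        nlinarith [mul_le_mul_of_nonneg_right (mul_le_mul_of_nonneg_left hhγ hh.le) hq,
          mul_nonneg (sq_nonneg (γ * h)) hq]

theorem lyapunovSeminorm_langevinStep_le {γ h : ℝ} (hγ0 : 0 < γ) (hγ2 : γ < 2) (hh : 0 < h)
    (hhγ : h ≤ γ / 16) (v : EuclideanSpace ℝ (Fin 2)) :
    lyapunovSeminorm γ (langevinStep γ h v) ≤ (1 - γ * h / 8) * lyapunovSeminorm γ v := by
  have hr : 0 ≤ 1 - γ * h / 8 := by nlinarith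
  refine (pow_le_pow_iff_left₀ (apply_nonneg _ _) (by positivity) two_ne_zero).1 ?_
  rw [mul_pow, lyapunovSeminorm_sq, lyapunovSeminorm_sq, langevinStep_apply_zero,
    langevinStep_apply_one]
  exact (le_of_eq (by ring)).trans
    (lyapunov_step_sq_le hγ0 hγ2 hh hhγ (v 0) (γ / 2 * v 0 + v 1))

theorem ewsg_mean_dynamics_perturbation_general
    (γ : ℝ) (hγ0 : 0 < γ) (hγ2 : γ < 2) (p : ℕ) (C₀ : ℝ) (hC₀ : 0 < C₀) :
    ∃ h₀ > 0, ∃ Chat > 0, ∀ h : ℝ, 0 < h → h < h₀ →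
      ∀ e x x' : ℕ → EuclideanSpace ℝ (Fin 2),
        (∀ k, ‖e k‖ ≤ C₀ * h ^ p) →
        (∀ k, x (k + 1) =
          x k + h • (Matrix.toEuclideanLin (!![0, 1; -1, -γ]) (x k)) + h • e k) →
        (∀ k, x' (k + 1) =
          x' k + h • (Matrix.toEuclideanLin (!![0, 1; -1, -γ]) (x' k))) →
        x 0 = x' 0 →
        ((∃ K > 0, ∃ r : ℝ, 0 ≤ r ∧ r < 1 ∧ ∀ k, ‖x' k‖ ≤ K * r ^ k * ‖x' 0‖) ∧
          Tendsto (fun k => ‖x' k‖) atTop (nhds 0) ∧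
          ∀ k, ‖x k - x' k‖ ≤ Chat * h ^ p) := by
  refine ⟨γ / 16, by positivity, 32 * C₀ / γ, by positivity,
    fun h hh hhγ e x x' he hx hx' h0 ↦ ?_⟩
  set N := lyapunovSeminorm γ
  have hγsq : γ ^ 2 ≤ 4 := by nlinarith
  have hr0 : 0 ≤ 1 - γ * h / 8 := by nlinarith
  have hr1 : 1 - γ * h / 8 < 1 := by linarith [mul_pos hγ0 hh]
  have hcontr := lyapunovSeminorm_langevinStep_le hγ0 hγ2 hh hhγ.le
  have hgeo (k : ℕ) : ‖x' k‖ ≤ 4 * (1 - γ * h / 8) ^ k * ‖x' 0‖ :=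
    calc ‖x' k‖ ≤ 2 * N (x' k) := norm_le_lyapunovSeminorm hγsq _
      _ ≤ 2 * ((1 - γ * h / 8) ^ k * N (x' 0)) :=
          mul_le_mul_of_nonneg_left (le_geom (u := fun k ↦ N (x' k)) hr0 k
            fun j _ ↦ (hx' j).symm ▸ hcontr (x' j)) zero_le_two
      _ ≤ 4 * (1 - γ * h / 8) ^ k * ‖x' 0‖ := by
          nlinarith [lyapunovSeminorm_le hγsq (x' 0), pow_nonneg hr0 k]
  refine ⟨⟨4, by norm_num, _, hr0, hr1, hgeo⟩, ?_, fun k ↦ ?_⟩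
  · refine squeeze_zero (fun _ ↦ norm_nonneg _)
      (fun k ↦ (hgeo k).trans_eq (mul_right_comm _ _ _)) ?_
    simpa using (tendsto_pow_atTop_nhds_zero_of_lt_one hr0 hr1).const_mul (4 * ‖x' 0‖)
  have hpert (k : ℕ) : N (h • e k) ≤ 2 * h * (C₀ * h ^ p) :=
    calc N (h • e k) = h * N (e k) := by rw [map_smul_eq_mul, Real.norm_of_nonneg hh.le]
      _ ≤ h * (2 * ‖e k‖) := by gcongr; exact lyapunovSeminorm_le hγsq _
      _ ≤ 2 * h * (C₀ * h ^ p) := by nlinarith [he k]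
  calc ‖x k - x' k‖ ≤ 2 * N (x k - x' k) := norm_le_lyapunovSeminorm hγsq _
    _ ≤ 2 * (2 * h * (C₀ * h ^ p) / (1 - (1 - γ * h / 8))) := by
        gcongr
        exact seminorm_sub_le_of_perturbed hr0 hr1 hcontr hpert hx hx' h0 k
    _ = 32 * C₀ / γ * h ^ p := by field_simp; ring

/-- **Deterministic core of the theorem in Appendix H.** For the Langevin drift matrix
`A = [[0,1],[−1,−γ]]` with `0 < γ < 2`, there are `h₀ > 0` and `Ĉ > 0` such that for every
step size `h ∈ (0, h₀)` and every perturbation sequence with `‖e_k‖ ≤ C₀ hᵖ`, the iterations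
`x_{k+1} = (I + hA)x_k + h e_k` and `x'_k = (I + hA)ᵏ x₀` (same initial condition) satisfy:
(i) `‖x'_k‖ → 0` geometrically, and (ii) `‖x_k − x'_k‖ ≤ Ĉ hᵖ` for all `k`. -/
theorem ewsg_mean_dynamics_perturbation
    (γ : ℝ) (hγ0 : 0 < γ) (hγ2 : γ < 2) (p : ℕ) (hp : 1 ≤ p) (C₀ : ℝ) (hC₀ : 0 < C₀) :
    ∃ h₀ > 0, ∃ Chat > 0, ∀ h : ℝ, 0 < h → h < h₀ →
      ∀ e x x' : ℕ → EuclideanSpace ℝ (Fin 2),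
        (∀ k, ‖e k‖ ≤ C₀ * h ^ p) →
        (∀ k, x (k + 1) =
          x k + h • (Matrix.toEuclideanLin (!![0, 1; -1, -γ]) (x k)) + h • e k) →
        (∀ k, x' (k + 1) =
          x' k + h • (Matrix.toEuclideanLin (!![0, 1; -1, -γ]) (x' k))) →
        x 0 = x' 0 →
        ((∃ K > 0, ∃ r : ℝ, 0 ≤ r ∧ r < 1 ∧ ∀ k, ‖x' k‖ ≤ K * r ^ k * ‖x' 0‖) ∧
          Tendsto (fun k => ‖x' k‖) atTop (nhds 0) ∧
          ∀ k, ‖x k - x' k‖ ≤ Chat * h ^ p) :=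
  ewsg_mean_dynamics_perturbation_general γ hγ0 hγ2 p C₀ hC₀
end
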